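/- arXiv:1606.08976 — 2 statements merged into one kernel-verified Lean document; each statement's English description precedes it below -/
import Mathlib

section
/- Let B be a 1-symmetric convex body in ℝⁿ (n ≥ 2) with ‖e₁‖_B = 1 and ‖e₁+⋯+eₙ‖_B ≥ 2. If x ∈ ∂B satisfies |{i : |xᵢ| = ‖x‖_∞}| > ⌈n/2⌉, then ‖x‖_B > ‖x‖_∞; consequently every v in the Gauss image G(B,x) has at least two nonzero coordinates. -/
/-!
Let `t = ‖x‖_∞` and let `S` be the set of coordinates where `|xᵢ| = t`, with `k = |S| > n/2`.
Since `B` is convex and invariant under sign changes, it is solid: shrinking coordinates in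
absolute value keeps a point in `B`. Hence `t·1_S ∈ B`, and averaging its cyclic shifts gives
`(kt/n)·(1,…,1) ∈ B`. So `(kt/n)·‖(1,…,1)‖_B ≤ 1`, and `‖(1,…,1)‖_B ≥ 2` forces
`t ≤ n/(2k) < 1 = ‖x‖_B`. If a unit normal `v` at `x` were `±eⱼ`, testing it against
`±eⱼ ∈ B` would give `|xⱼ| ≥ 1 > t`.
-/

open scoped BigOperators Topology

/-- A 1-symmetric convex body: a compact convex set with nonempty interior that is
invariant under coordinate sign changes and coordinate permutations. -/
def IsSymBody (n : ℕ) (B : Set (Fin n → ℝ)) : Prop :=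
  IsCompact B ∧ Convex ℝ B ∧ (interior B).Nonempty ∧
    ∀ x ∈ B, ∀ ε : Fin n → ℝ, (∀ i, ε i = 1 ∨ ε i = -1) →
      ∀ σ : Equiv.Perm (Fin n), (fun i => ε i * x (σ i)) ∈ B

/-- The Gauss image of `B` at `x`: the set of unit outer normal vectors at `x`. -/
def gaussImage {n : ℕ} (B : Set (Fin n → ℝ)) (x : Fin n → ℝ) : Set (Fin n → ℝ) :=
  {v | (∑ i, (v i) ^ 2 = 1) ∧ ∀ y ∈ B, (∑ i, v i * (y i - x i)) ≤ 0}

/-- The boundary point `x` of `B` is illuminated in direction `y`. -/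
def Illuminates {n : ℕ} (y x : Fin n → ℝ) (B : Set (Fin n → ℝ)) : Prop :=
  ∃ ε : ℝ, 0 < ε ∧ x + ε • y ∈ interior B

section Solid

variable {ι : Type*} [DecidableEq ι] {B : Set (ι → ℝ)}

theorem Convex.update_mem_of_abs_le (hconv : Convex ℝ B)
    (hflip : ∀ y ∈ B, ∀ j, Function.update y j (-y j) ∈ B) {y : ι → ℝ} (hy : y ∈ B) {j : ι}
    {t : ℝ} (ht : |t| ≤ |y j|) : Function.update y j t ∈ B := by
  by_cases hyj : y j = 0
  · rw [hyj, abs_zero, abs_nonpos_iff] at ht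
    rwa [ht, ← hyj, Function.update_eq_self]
  obtain ⟨hlo, hhi⟩ : -1 ≤ t / y j ∧ t / y j ≤ 1 := by
    rw [← abs_le, abs_div, div_le_one (abs_pos.mpr hyj)]
    exact ht
  have hcombo : ((1 + t / y j) / 2) • y + ((1 - t / y j) / 2) • Function.update y j (-y j)
      = Function.update y j t := by
    funext i
    by_cases hij : i = j
    · subst hij
      simp only [Pi.add_apply, Pi.smul_apply, smul_eq_mul, Function.update_self]
      field_simp
      ring
    · simp only [Pi.add_apply, Pi.smul_apply, smul_eq_mul, Function.update_of_ne hij]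
      ring
  rw [← hcombo]
  exact hconv hy (hflip y hy j) (by linarith) (by linarith) (by ring)

theorem Convex.mem_of_abs_le [Fintype ι] (hconv : Convex ℝ B)
    (hflip : ∀ y ∈ B, ∀ j, Function.update y j (-y j) ∈ B) {y w : ι → ℝ} (hy : y ∈ B)
    (hw : ∀ i, |w i| ≤ |y i|) : w ∈ B := by
  suffices h : ∀ T : Finset ι, (fun i => if i ∈ T then w i else y i) ∈ B by
    simpa using h Finset.univ
  intro T
  induction T using Finset.induction_on with
  | empty => simpa using hy
  | @insert j T hj ih =>
    have hupd := hconv.update_mem_of_abs_le hflip ih (j := j) (t := w j)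
      (by simpa [hj] using hw j)
    convert hupd using 1
    funext i
    by_cases hij : i = j
    · subst hij
      simp
    · simp [hij]

end Solid

theorem Convex.const_mean_mem {n : ℕ} [NeZero n] {B : Set (Fin n → ℝ)} (hconv : Convex ℝ B)
    (hperm : ∀ y ∈ B, ∀ σ : Equiv.Perm (Fin n), y ∘ σ ∈ B) {y : Fin n → ℝ} (hy : y ∈ B) :
    (fun _ => (∑ i, y i) / n) ∈ B := by
  have hmean : ∑ m : Fin n, (n : ℝ)⁻¹ • (y ∘ Equiv.addLeft m) = fun _ => (∑ i, y i) / n := by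
    funext i
    simp only [Finset.sum_apply, Pi.smul_apply, smul_eq_mul, Function.comp_apply,
      Equiv.coe_addLeft, ← Finset.mul_sum]
    rw [Fintype.sum_equiv (Equiv.addRight i) (fun m => y (m + i)) y (fun _ => rfl), inv_mul_eq_div]
  rw [← hmean]
  refine hconv.sum_mem (fun _ _ => by positivity) ?_ (fun m _ => hperm y hy _)
  simp [Finset.card_univ]

namespace IsSymBody

variable {n : ℕ} {B : Set (Fin n → ℝ)}

theorem update_neg_mem (hB : IsSymBody n B) {y : Fin n → ℝ} (hy : y ∈ B) (j : Fin n) :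
    Function.update y j (-y j) ∈ B := by
  convert hB.2.2.2 y hy (fun i => if i = j then -1 else 1) (fun i => by split_ifs <;> simp) 1
    using 1
  funext i
  by_cases hij : i = j
  · subst hij
    simp
  · simp [hij]

theorem comp_perm_mem (hB : IsSymBody n B) {y : Fin n → ℝ} (hy : y ∈ B)
    (σ : Equiv.Perm (Fin n)) : y ∘ σ ∈ B := by
  simpa [Function.comp_def] using hB.2.2.2 y hy (fun _ => 1) (fun _ => Or.inl rfl) σ

theorem mem_nhds_zero (hB : IsSymBody n B) : B ∈ 𝓝 0 := by
  obtain ⟨-, hconv, ⟨p, hp⟩, hsym⟩ := hB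
  have hneg : -p ∈ B := by
    convert hsym p (interior_subset hp) (fun _ => -1) (fun _ => Or.inr rfl) 1 using 1
    funext i
    simp
  have hmid := hconv.combo_interior_self_mem_interior hp hneg (a := 1 / 2) (b := 1 / 2)
    (by norm_num) (by norm_num) (by norm_num)
  rw [smul_neg, add_neg_cancel] at hmid
  exact mem_interior_iff_mem_nhds.mp hmid

theorem mem_of_gauge_le_one (hB : IsSymBody n B) {y : Fin n → ℝ} (hy : gauge B y ≤ 1) :
    y ∈ B := by
  rw [gauge_le_one_iff_mem_closure hB.2.1 hB.mem_nhds_zero, hB.1.isClosed.closure_eq] at hy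
  exact hy

theorem norm_lt_one_of_two_le_gauge_one [NeZero n] (hB : IsSymBody n B)
    (hdist : 2 ≤ gauge B (fun _ => 1)) {x : Fin n → ℝ} (hx : x ∈ B)
    (hbig : n < 2 * (Finset.univ.filter fun i => |x i| = ‖x‖).card) : ‖x‖ < 1 := by
  set k := (Finset.univ.filter fun i => |x i| = ‖x‖).card
  set z : Fin n → ℝ := fun i => if |x i| = ‖x‖ then ‖x‖ else 0
  have hz : z ∈ B := by
    refine hB.2.1.mem_of_abs_le (fun y hy j => hB.update_neg_mem hy j) hx fun i => ?_
    by_cases hi : |x i| = ‖x‖ <;> simp [z, hi]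
  have hsum : ∑ i, z i = k * ‖x‖ := by
    simp only [z, ← Finset.sum_filter, Finset.sum_const, nsmul_eq_mul, k]
  have hconst : (k * ‖x‖ / n) • (fun _ : Fin n => (1 : ℝ)) ∈ B := by
    have := hB.2.1.const_mean_mem (fun y hy σ => hB.comp_perm_mem hy σ) hz
    rw [hsum] at this
    convert this using 1
    funext i
    simp
  have hgauge := gauge_le_one_of_mem hconst
  rw [gauge_smul_of_nonneg (by positivity), smul_eq_mul] at hgauge
  have hn : (0 : ℝ) < n := by exact_mod_cast Nat.pos_of_neZero n
  have hbig' : (n : ℝ) < 2 * k := by exact_mod_cast hbig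
  have hkx : 2 * k * ‖x‖ ≤ n := by
    rw [div_mul_eq_mul_div, div_le_one hn] at hgauge
    nlinarith [norm_nonneg x]
  nlinarith [norm_nonneg x]

theorem two_le_card_support_of_mem_gaussImage (hB : IsSymBody n B) {j₀ : Fin n}
    (he : Pi.single j₀ 1 ∈ B) {x v : Fin n → ℝ} (hx : ‖x‖ < 1) (hv : v ∈ gaussImage B x) :
    2 ≤ (Finset.univ.filter fun i => v i ≠ 0).card := by
  obtain ⟨hunit, hnormal⟩ := hv
  by_contra! hcard
  obtain ⟨j, hj⟩ : ∃ j, v j ≠ 0 := by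
    by_contra! hzero
    simp [hzero] at hunit
  have hvanish : ∀ i ≠ j, v i = 0 := fun i hij => by
    by_contra hi
    exact hij (Finset.card_le_one.mp (Nat.le_of_lt_succ hcard) i (by simpa using hi) j
      (by simpa using hj))
  have hsingle : ∀ f : Fin n → ℝ, ∑ i, v i * f i = v j * f j := fun f =>
    Finset.sum_eq_single j (fun i _ hij => by rw [hvanish i hij, zero_mul]) (by simp)
  have hsign : v j = 1 ∨ v j = -1 := by
    rw [← sq_eq_one_iff, ← hunit, sq, ← hsingle v]
    simp only [sq]
  have hle := hnormal _ (hB.2.2.2 _ he (fun _ => v j) (fun _ => hsign) (Equiv.swap j₀ j))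
  simp only [hsingle, Equiv.swap_apply_right, Pi.single_eq_same, mul_one] at hle
  have hxj : |x j| < 1 := (by simpa using norm_le_pi_norm x j : |x j| ≤ ‖x‖).trans_lt hx
  rcases hsign with h | h <;> rw [h] at hle <;>
    linarith [le_abs_self (x j), neg_abs_le (x j)]

end IsSymBody

theorem statement_13 (n : ℕ) (hn : 2 ≤ n) (B : Set (Fin n → ℝ)) (hB : IsSymBody n B)
    (hnorm : gauge B (Pi.single (⟨0, by omega⟩ : Fin n) (1 : ℝ)) = 1)
    (hdist : 2 ≤ gauge B (∑ i, Pi.single i (1 : ℝ)))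
    (x : Fin n → ℝ) (hx : x ∈ frontier B)
    (hbig : (n + 1) / 2 < (Finset.univ.filter fun i => |x i| = ‖x‖).card) :
    ‖x‖ < gauge B x ∧
      ∀ v ∈ gaussImage B x, 2 ≤ (Finset.univ.filter fun i => v i ≠ 0).card := by
  have : NeZero n := ⟨by omega⟩
  have hgauge : gauge B x = 1 :=
    (gauge_eq_one_iff_mem_frontier hB.2.1 hB.mem_nhds_zero).mpr hx
  have hlt : ‖x‖ < 1 := by
    refine hB.norm_lt_one_of_two_le_gauge_one ?_ (hB.1.isClosed.frontier_subset hx) (by omega)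
    rwa [Finset.univ_sum_single (fun _ => (1 : ℝ))] at hdist
  exact ⟨hgauge ▸ hlt, fun v hv =>
    hB.two_le_card_support_of_mem_gaussImage (hB.mem_of_gauge_le_one hnorm.le) hlt hv⟩
end

section
/- Let B be a 1-symmetric convex body in ℝⁿ, x ∈ ∂B, v ∈ G(B,x), and let J = {i : |xᵢ| = ‖x‖_∞}. Suppose y ∈ {−1,0,1}ⁿ satisfies yᵢ = −sign(xᵢ) for all i ∈ J and the support of y has cardinality at most 2|J| − 1. Then ⟨y, v⟩ < 0; hence x is illuminated in direction y. -/
open scoped BigOperators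

/-!
Reflecting one coordinate, or swapping two, maps `B` into itself; comparing `x` with these images
shows that every outer normal `v` at `x` satisfies `vⱼ xⱼ ≥ 0`, and `|vᵢ| ≤ |vⱼ|` whenever
`|xᵢ| < |xⱼ|`. In `⟨y, v⟩` the coordinates in `J` therefore contribute `-∑_{j ∈ J} |vⱼ|`, while
each of the at most `|J| - 1` other nonzero coordinates of `y` contributes at most
`min_{j ∈ J} |vⱼ|`; since `v` does not vanish on `J`, the sum is negative. Finally, if `y` did not
illuminate `x`, separating the interior of `B` from the open ray `x + ℝ₊ y` would produce an
outer normal `v` at `x` with `⟨y, v⟩ ≥ 0`.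
-/

open Filter Topology

lemma exists_sign_mul_eq_abs (t : ℝ) : ∃ e : ℝ, (e = 1 ∨ e = -1) ∧ e * t = |t| := by
  rcases le_or_gt 0 t with ht | ht
  · exact ⟨1, Or.inl rfl, by rw [one_mul, abs_of_nonneg ht]⟩
  · exact ⟨-1, Or.inr rfl, by rw [abs_of_neg ht]; ring⟩

lemma Real.sign_mul_eq_abs_of_mul_nonneg {t s : ℝ} (ht : t ≠ 0) (h : 0 ≤ s * t) :
    Real.sign t * s = |s| := by
  rcases ht.lt_or_gt with ht | ht
  · rw [Real.sign_of_neg ht, abs_of_nonpos (nonpos_of_mul_nonneg_left h ht)]; ring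
  · rw [Real.sign_of_pos ht, abs_of_nonneg (nonneg_of_mul_nonneg_left h ht), one_mul]

lemma Finset.sum_neg_of_card_sdiff_lt {ι : Type*} [DecidableEq ι] {s t : Finset ι}
    {a w : ι → ℝ} (hts : t ⊆ s) (hcard : (s \ t).card < t.card)
    (ht : ∀ j ∈ t, a j = -w j) (hw : ∀ j ∈ t, 0 ≤ w j)
    (hdom : ∀ i ∈ s \ t, ∀ j ∈ t, a i ≤ w j) (hpos : ∃ j ∈ t, 0 < w j) :
    ∑ i ∈ s, a i < 0 := by
  obtain ⟨j₀, hj₀, hwj₀⟩ := hpos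
  obtain ⟨j₁, hj₁, hmin⟩ := t.exists_min_image w ⟨j₀, hj₀⟩
  have hcard' : ((s \ t).card : ℝ) ≤ (t.erase j₀).card := by
    rw [Finset.card_erase_of_mem hj₀]; exact_mod_cast Nat.le_sub_one_of_lt hcard
  have hout : ∑ i ∈ s \ t, a i ≤ ∑ j ∈ t.erase j₀, w j :=
    calc ∑ i ∈ s \ t, a i ≤ (s \ t).card * w j₁ := by
          simpa using Finset.sum_le_card_nsmul _ _ _ fun i hi => hdom i hi j₁ hj₁
      _ ≤ (t.erase j₀).card * w j₁ := mul_le_mul_of_nonneg_right hcard' (hw j₁ hj₁)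
      _ ≤ ∑ j ∈ t.erase j₀, w j := by
          simpa using Finset.card_nsmul_le_sum _ _ _ fun j hj => hmin j (Finset.mem_of_mem_erase hj)
  have hin : ∑ j ∈ t, a j = -(w j₀ + ∑ j ∈ t.erase j₀, w j) := by
    rw [Finset.add_sum_erase t w hj₀, ← Finset.sum_neg_distrib]
    exact Finset.sum_congr rfl ht
  rw [← Finset.sum_sdiff hts, hin]
  linarith

section Normals

variable {n : ℕ} {B : Set (Fin n → ℝ)} {x : Fin n → ℝ}

lemma exists_mem_gaussImage_of_forall_le (f : (Fin n → ℝ) →L[ℝ] ℝ) (hf : f ≠ 0)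
    (hfB : ∀ z ∈ B, f z ≤ f x) :
    ∃ v ∈ gaussImage B x, ∃ s > 0, ∀ w, f w = s * ∑ i, w i * v i := by
  set c : Fin n → ℝ := fun i => f fun j => if i = j then 1 else 0
  have hfc : ∀ w, f w = ∑ i, w i * c i := fun w => f.toLinearMap.pi_apply_eq_sum_univ w
  have hc : c ≠ 0 := fun hc => hf <| ContinuousLinearMap.ext fun w => by simp [hfc, hc]
  have hc2 : 0 < ∑ i, c i ^ 2 := by
    obtain ⟨i, hi⟩ := Function.ne_iff.mp hc
    exact Finset.sum_pos' (fun i _ => sq_nonneg _) ⟨i, Finset.mem_univ _, sq_pos_of_ne_zero hi⟩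
  set s := √(∑ i, c i ^ 2)
  have hs : 0 < s := Real.sqrt_pos.mpr hc2
  have hfv : ∀ w, f w = s * ∑ i, w i * (c i / s) := fun w => by
    rw [hfc, Finset.mul_sum]
    exact Finset.sum_congr rfl fun i _ => by field_simp
  refine ⟨fun i => c i / s, ⟨?_, fun z hz => ?_⟩, s, hs, hfv⟩
  · simp_rw [div_pow, ← Finset.sum_div, s, Real.sq_sqrt hc2.le, div_self hc2.ne']
  · have h := hfB z hz
    rw [hfv, hfv, ← sub_nonpos, ← mul_sub, ← Finset.sum_sub_distrib] at h
    simpa only [mul_comm (c _ / s), sub_mul] using nonpos_of_mul_nonpos_right h hs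

lemma exists_mem_gaussImage_of_not_illuminates (hconv : Convex ℝ B)
    (hBint : (interior B).Nonempty) (hx : x ∈ B) {y : Fin n → ℝ} (hy : ¬ Illuminates y x B) :
    ∃ v ∈ gaussImage B x, 0 ≤ ∑ i, y i * v i := by
  have hline : ∀ ε : ℝ, AffineMap.lineMap x (x + y) ε = x + ε • y := fun ε => by
    rw [AffineMap.lineMap_apply_module', add_sub_cancel_left, add_comm]
  have hdisj : Disjoint (interior B) (AffineMap.lineMap x (x + y) '' Set.Ioi (0 : ℝ)) := by
    refine Set.disjoint_right.mpr ?_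
    rintro _ ⟨ε, hε, rfl⟩ hzB
    exact hy ⟨ε, hε, hline ε ▸ hzB⟩
  obtain ⟨f, u, hfint, hfray⟩ := geometric_hahn_banach_open hconv.interior isOpen_interior
    ((convex_Ioi 0).affine_image _) hdisj
  have hfB : ∀ z ∈ B, f z ≤ u := by
    have : closure (interior B) ⊆ {z | f z ≤ u} :=
      closure_minimal (fun z hz => (hfint z hz).le) (isClosed_le f.continuous continuous_const)
    rw [hconv.closure_interior_eq_closure_of_nonempty_interior hBint] at this
    exact fun z hz => this (subset_closure hz)
  have hray : ∀ ε : ℝ, 0 < ε → u ≤ f x + ε * f y := fun ε hε => by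
    simpa only [hline, map_add, map_smul, smul_eq_mul] using hfray _ ⟨ε, hε, rfl⟩
  -- `x` lies on the separating hyperplane, being a limit of points of the ray
  have hfx : f x = u := by
    have hlim : Tendsto (fun ε : ℝ => f x + ε * f y) (𝓝[>] 0) (𝓝 (f x)) := by
      have : Continuous fun ε : ℝ => f x + ε * f y := by fun_prop
      simpa using (this.tendsto 0).mono_left nhdsWithin_le_nhds
    exact le_antisymm (hfB x hx) (ge_of_tendsto hlim (eventually_nhdsWithin_of_forall hray))
  have hfy : 0 ≤ f y := by linarith [hray 1 one_pos]
  have hf : f ≠ 0 := by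
    obtain ⟨a, ha⟩ := hBint
    intro hf0
    simpa [hf0] using (hfint a ha).trans_eq hfx.symm
  obtain ⟨v, hv, s, hs, hfv⟩ := exists_mem_gaussImage_of_forall_le f hf (hfx ▸ hfB)
  exact ⟨v, hv, nonneg_of_mul_nonneg_right (hfv y ▸ hfy) hs⟩

end Normals

namespace IsSymBody

variable {n : ℕ} {B : Set (Fin n → ℝ)}

lemma neg_mem (hB : IsSymBody n B) {z : Fin n → ℝ} (hz : z ∈ B) : -z ∈ B := by
  simpa [Pi.neg_def] using hB.2.2.2 z hz (fun _ => -1) (fun _ => Or.inr rfl) (Equiv.refl _)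

lemma zero_mem_interior (hB : IsSymBody n B) : (0 : Fin n → ℝ) ∈ interior B := by
  obtain ⟨a, ha⟩ := hB.2.2.1
  simpa using hB.2.1.combo_interior_closure_mem_interior ha
    (subset_closure (hB.neg_mem (interior_subset ha))) one_half_pos one_half_pos.le (add_halves 1)

variable {x v : Fin n → ℝ}

lemma mul_nonneg_of_mem_gaussImage (hB : IsSymBody n B) (hx : x ∈ B)
    (hv : v ∈ gaussImage B x) (j : Fin n) : 0 ≤ v j * x j := by
  have h := hv.2 _ <| hB.2.2.2 x hx (Function.update 1 j (-1))
    (fun i => by by_cases h : i = j <;> simp [h]) (Equiv.refl _)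
  rw [Fintype.sum_eq_single j fun i hi => by simp [hi]] at h
  simp only [Function.update_self, Equiv.refl_apply] at h
  linarith

lemma abs_le_abs_of_mem_gaussImage (hB : IsSymBody n B) (hx : x ∈ B)
    (hv : v ∈ gaussImage B x) {i j : Fin n} (hij : |x i| < |x j|) : |v i| ≤ |v j| := by
  have hne : i ≠ j := by rintro rfl; exact lt_irrefl _ hij
  obtain ⟨e₁, he₁, h₁⟩ := exists_sign_mul_eq_abs (v i * x j)
  obtain ⟨e₂, he₂, h₂⟩ := exists_sign_mul_eq_abs (v j * x i)
  -- compare `x` with the point obtained by swapping `xᵢ` and `xⱼ`, with the signs chosen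
  -- to maximise `⟨v, ·⟩`
  have h := hv.2 _ <| hB.2.2.2 x hx (Function.update (Function.update 1 i e₁) j e₂)
    (fun k => by
      by_cases hki : k = i
      · subst hki; simpa [hne] using he₁
      · by_cases hkj : k = j
        · subst hkj; simpa using he₂
        · simp [hki, hkj]) (Equiv.swap i j)
  rw [Fintype.sum_eq_add i j hne fun k ⟨hki, hkj⟩ => by
    simp [hki, hkj, Equiv.swap_apply_of_ne_of_ne hki hkj]] at h
  simp only [Function.update_self, Function.update_of_ne hne, Equiv.swap_apply_left,
    Equiv.swap_apply_right] at h
  have hi : v i * x i ≤ |v i| * |x i| := abs_mul (v i) (x i) ▸ le_abs_self _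
  have hj : v j * x j ≤ |v j| * |x j| := abs_mul (v j) (x j) ▸ le_abs_self _
  rw [abs_mul] at h₁ h₂
  have key : |v i| * (|x j| - |x i|) ≤ |v j| * (|x j| - |x i|) := by nlinarith
  exact le_of_mul_le_mul_right key (sub_pos.mpr hij)

lemma sum_mul_neg_of_mem_gaussImage (hB : IsSymBody n B) (hx : x ∈ B) (hx0 : x ≠ 0)
    {y : Fin n → ℝ} (hy : ∀ i, |y i| ≤ 1) (hyJ : ∀ i, |x i| = ‖x‖ → y i = -Real.sign (x i))
    (hsupp : (Finset.univ.filter fun i => y i ≠ 0).card ≤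
      2 * (Finset.univ.filter fun i => |x i| = ‖x‖).card - 1)
    (hv : v ∈ gaussImage B x) (hvJ : ∃ j, |x j| = ‖x‖ ∧ v j ≠ 0) :
    ∑ i, y i * v i < 0 := by
  set J := Finset.univ.filter fun i => |x i| = ‖x‖
  have hxJ : ∀ j ∈ J, x j ≠ 0 := fun j hj hxj => by
    have : ‖x‖ = 0 := by simpa [J, hxj] using (Finset.mem_filter.mp hj).2.symm
    exact hx0 (norm_eq_zero.mp this)
  have hJS : J ⊆ Finset.univ.filter fun i => y i ≠ 0 := fun j hj => by
    simpa [hyJ j (Finset.mem_filter.mp hj).2, Real.sign_eq_zero_iff] using hxJ j hj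
  obtain ⟨j₀, hj₀, hvj₀⟩ := hvJ
  have hj₀J : j₀ ∈ J := Finset.mem_filter.mpr ⟨Finset.mem_univ _, hj₀⟩
  rw [← Finset.sum_filter_of_ne fun i _ h => left_ne_zero_of_mul h]
  refine Finset.sum_neg_of_card_sdiff_lt (w := fun i => |v i|) hJS ?_ (fun j hj => ?_)
    (fun _ _ => abs_nonneg _) (fun i hi j hj => ?_) ⟨j₀, hj₀J, abs_pos.mpr hvj₀⟩
  · have := Finset.card_pos.mpr ⟨j₀, hj₀J⟩
    rw [Finset.card_sdiff_of_subset hJS]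
    omega
  · rw [hyJ j (Finset.mem_filter.mp hj).2, neg_mul, Real.sign_mul_eq_abs_of_mul_nonneg
      (hxJ j hj) (hB.mul_nonneg_of_mem_gaussImage hx hv j)]
  · have hxij : |x i| < |x j| := by
      rw [(Finset.mem_filter.mp hj).2]
      refine (norm_le_pi_norm x i).lt_of_ne fun h => (Finset.mem_sdiff.mp hi).2 ?_
      simpa [J] using h
    calc y i * v i ≤ |y i| * |v i| := abs_mul (y i) (v i) ▸ le_abs_self _
      _ ≤ |v i| := mul_le_of_le_one_left (abs_nonneg _) (hy i)
      _ ≤ |v j| := hB.abs_le_abs_of_mem_gaussImage hx hv hxij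

end IsSymBody

theorem statement_14_general (n : ℕ) (B : Set (Fin n → ℝ)) (hB : IsSymBody n B)
    (x : Fin n → ℝ) (hx : x ∈ frontier B)
    (y : Fin n → ℝ) (hy : ∀ i, y i = -1 ∨ y i = 0 ∨ y i = 1)
    (hyJ : ∀ i, |x i| = ‖x‖ → y i = -Real.sign (x i))
    (hsupp : (Finset.univ.filter fun i => y i ≠ 0).card ≤
      2 * (Finset.univ.filter fun i => |x i| = ‖x‖).card - 1)
    (hvJ : ∀ v ∈ gaussImage B x, ∃ j, |x j| = ‖x‖ ∧ v j ≠ 0) :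
    (∀ v ∈ gaussImage B x, (∑ i, y i * v i) < 0) ∧ Illuminates y x B := by
  have hxB : x ∈ B := hB.1.isClosed.frontier_subset hx
  have hx0 : x ≠ 0 := fun h => hx.2 (h ▸ hB.zero_mem_interior)
  have hy' : ∀ i, |y i| ≤ 1 := fun i => by rcases hy i with h | h | h <;> simp [h]
  have hnormal : ∀ v ∈ gaussImage B x, ∑ i, y i * v i < 0 := fun v hv =>
    hB.sum_mul_neg_of_mem_gaussImage hxB hx0 hy' hyJ hsupp hv (hvJ v hv)
  refine ⟨hnormal, by_contra fun hill => ?_⟩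
  obtain ⟨v, hv, hyv⟩ := exists_mem_gaussImage_of_not_illuminates hB.2.1 hB.2.2.1 hxB hill
  exact (hnormal v hv).not_ge hyv

theorem statement_14 (n : ℕ) (hn : 2 ≤ n) (B : Set (Fin n → ℝ)) (hB : IsSymBody n B)
    (x : Fin n → ℝ) (hx : x ∈ frontier B)
    (y : Fin n → ℝ) (hy : ∀ i, y i = -1 ∨ y i = 0 ∨ y i = 1)
    (hyJ : ∀ i, |x i| = ‖x‖ → y i = -Real.sign (x i))
    (hsupp : (Finset.univ.filter fun i => y i ≠ 0).card ≤
      2 * (Finset.univ.filter fun i => |x i| = ‖x‖).card - 1)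
    (hvJ : ∀ v ∈ gaussImage B x, ∃ j, |x j| = ‖x‖ ∧ v j ≠ 0) :
    (∀ v ∈ gaussImage B x, (∑ i, y i * v i) < 0) ∧ Illuminates y x B :=
  statement_14_general n B hB x hx y hy hyJ hsupp hvJ
end
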